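/- Let P be an e-copointed C-Galois extension of B = P^{co C}. Then the subalgebra of coinvariants coincides with the e-coinvariants: P^{co C} = {b ∈ P | ρ(b) = b ⊗ e}. -/
import Mathlib


open TensorProduct

variable (k C P : Type) [Field k] [AddCommGroup C] [Module k C] [Coalgebra k C]
  [Ring P] [Algebra k P]

/-- The canonical Galois map `P ⊗ P → P ⊗ C`, `p ⊗ q ↦ p·ρ(q)` (defined on the tensor
product over `k`; the Galois condition is phrased by saying that it is surjective and that
its kernel is exactly the kernel of `P ⊗ P → P ⊗_B P`). -/
noncomputable def canMap (ρ : P →ₗ[k] P ⊗[k] C) : P ⊗[k] P →ₗ[k] P ⊗[k] C :=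
  LinearMap.rTensor C (LinearMap.mul' k P) ∘ₗ
    (TensorProduct.assoc k P P C).symm.toLinearMap ∘ₗ LinearMap.lTensor P ρ

/-- The coinvariants `B = P^{co C} = {b | ∀ p, ρ(b p) = b·ρ(p)}`. -/
def coinv (ρ : P →ₗ[k] P ⊗[k] C) : Set P :=
  {b : P | ∀ p : P, ρ (b * p) = LinearMap.rTensor C (LinearMap.mulLeft k b) (ρ p)}

/-- The submodule of `P ⊗ₖ P` spanned by the elements `p b ⊗ q - p ⊗ b q`, `b ∈ B`;
this is the kernel of `P ⊗ₖ P → P ⊗_B P`. -/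
def galRel (ρ : P →ₗ[k] P ⊗[k] C) : Submodule k (P ⊗[k] P) :=
  Submodule.span k
    {w : P ⊗[k] P | ∃ p q b : P, b ∈ coinv k C P ρ ∧
      w = (p * b) ⊗ₜ[k] q - p ⊗ₜ[k] (b * q)}

set_option linter.unusedSectionVars false

lemma mulLeft_add' (x x' : P) :
    LinearMap.mulLeft k (x + x') = LinearMap.mulLeft k x + LinearMap.mulLeft k x' :=
  LinearMap.ext fun p => add_mul x x' p

lemma mulLeft_smul' (c : k) (x : P) :
    LinearMap.mulLeft k (c • x) = c • LinearMap.mulLeft k x :=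
  LinearMap.ext fun p => smul_mul_assoc c x p

/-- The auxiliary map `P ⊗ P → Hom(P, P ⊗ C)`, `(x ⊗ y)(p) = (x · –) ρ(y p)`. -/
noncomputable def Amap (ρ : P →ₗ[k] P ⊗[k] C) : P ⊗[k] P →ₗ[k] (P →ₗ[k] P ⊗[k] C) :=
  TensorProduct.lift <| LinearMap.mk₂ k
    (fun x y => LinearMap.rTensor C (LinearMap.mulLeft k x) ∘ₗ ρ ∘ₗ LinearMap.mulLeft k y)
    (fun x x' y => by
      rw [mulLeft_add', LinearMap.rTensor_add, LinearMap.add_comp])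
    (fun c x y => by
      rw [mulLeft_smul', LinearMap.rTensor_smul, LinearMap.smul_comp])
    (fun x y y' => by
      rw [mulLeft_add', LinearMap.comp_add, LinearMap.comp_add])
    (fun c x y => by
      rw [mulLeft_smul', LinearMap.comp_smul, LinearMap.comp_smul])

lemma Amap_tmul (ρ : P →ₗ[k] P ⊗[k] C) (x y p : P) :
    Amap k C P ρ (x ⊗ₜ[k] y) p = LinearMap.rTensor C (LinearMap.mulLeft k x) (ρ (y * p)) :=
  rfl

lemma Amap_galRel (ρ : P →ₗ[k] P ⊗[k] C) :
    galRel k C P ρ ≤ LinearMap.ker (Amap k C P ρ) := by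
  rw [galRel, Submodule.span_le]
  rintro w ⟨p, q, b, hb, rfl⟩
  simp only [SetLike.mem_coe, LinearMap.mem_ker, map_sub]
  ext p'
  simp only [LinearMap.sub_apply, LinearMap.zero_apply, Amap_tmul]
  rw [mul_assoc, hb (q * p'), LinearMap.mulLeft_mul, LinearMap.rTensor_comp]
  simp [sub_eq_zero]

/-- for an `e`-copointed `C`-Galois extension, the coinvariants `P^{co C}`
coincide with the `e`-coinvariants `{b | ρ(b) = b ⊗ e}`. -/
theorem stmt1
    (ρ : P →ₗ[k] P ⊗[k] C)
    (hρcounit : ∀ p : P,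
      TensorProduct.rid k P
        (LinearMap.lTensor P (Coalgebra.counit (R := k) (A := C)) (ρ p)) = p)
    (hρcoassoc : ∀ p : P,
      TensorProduct.assoc k P C C (LinearMap.rTensor C ρ (ρ p)) =
        LinearMap.lTensor P (Coalgebra.comul (R := k) (A := C)) (ρ p))
    (e : C) (he_counit : Coalgebra.counit (R := k) e = 1)
    (he_comul : Coalgebra.comul (R := k) e = e ⊗ₜ[k] e)
    (h1 : ρ 1 = 1 ⊗ₜ[k] e)
    (hsurj : Function.Surjective (canMap k C P ρ))
    (hker : LinearMap.ker (canMap k C P ρ) = galRel k C P ρ) :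
    coinv k C P ρ = {b : P | ρ b = b ⊗ₜ[k] e} := by
  ext b
  constructor
  · intro hb
    have := hb 1
    rw [h1, mul_one] at this
    simpa using this
  · intro hb
    have hb' : ρ b = b ⊗ₜ[k] e := hb
    have hw : b ⊗ₜ[k] (1 : P) - (1 : P) ⊗ₜ[k] b ∈ LinearMap.ker (canMap k C P ρ) := by
      simp [canMap, h1, hb']
    rw [hker] at hw
    have h0 : Amap k C P ρ (b ⊗ₜ[k] (1 : P) - (1 : P) ⊗ₜ[k] b) = 0 := Amap_galRel k C P ρ hw
    intro p
    have h0p := LinearMap.congr_fun (map_sub (Amap k C P ρ) _ _ ▸ h0) p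
    rw [LinearMap.sub_apply, Amap_tmul, Amap_tmul, one_mul, LinearMap.mulLeft_one,
      LinearMap.rTensor_id, LinearMap.zero_apply, sub_eq_zero] at h0p
    exact (h0p.symm)
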